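/- arXiv:2203.15267 — 3 statements merged into one kernel-verified Lean document; each statement's English description precedes it below -/
import Mathlib

section
/- Fix a > 0, q ≥ 1, and a measurable set S ⊆ (0, ∞) such that S ∩ (a, ∞) and S ∩ (0, a] both have positive Lebesgue measure and ∫_S t^{q-1} e^{-t^2/(2σ^2)} dt < ∞ for all σ > 0. Define F(σ) = (∫_{S ∩ (a,∞)} t^{q-1} exp(−t^2/(2σ^2)) dt) / (∫_S t^{q-1} exp(−t^2/(2σ^2)) dt). Then F is strictly increasing in σ on (0, ∞). -/
open MeasureTheory Set Real

lemma chi_setIntegral_pos (q : ℕ) (σ : ℝ) (T : Set ℝ) (hT : MeasurableSet T)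
    (hT0 : T ⊆ Set.Ioi (0 : ℝ)) (hpos : 0 < volume T)
    (hi : IntegrableOn (fun t => t ^ (q - 1) * Real.exp (-(t ^ 2) / (2 * σ ^ 2))) T volume) :
    0 < ∫ t in T, t ^ (q - 1) * Real.exp (-(t ^ 2) / (2 * σ ^ 2)) := by
  rw [setIntegral_pos_iff_support_of_nonneg_ae ?_ hi]
  · refine hpos.trans_le (measure_mono ?_)
    intro t ht
    refine ⟨Function.mem_support.mpr ?_, ht⟩
    exact ne_of_gt (mul_pos (pow_pos (hT0 ht) _) (Real.exp_pos _))
  · filter_upwards [ae_restrict_mem hT] with t ht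
    exact le_of_lt (mul_pos (pow_pos (hT0 ht) _) (Real.exp_pos _))

/-- The truncated chi-type survival function is strictly increasing in the scale parameter. -/
theorem truncated_survival_strict_mono (a : ℝ) (ha : 0 < a) (q : ℕ) (hq : 1 ≤ q)
    (S : Set ℝ) (hS : MeasurableSet S) (hS0 : S ⊆ Set.Ioi (0 : ℝ))
    (hint : ∀ σ > (0 : ℝ),
      IntegrableOn (fun t => t ^ (q - 1) * Real.exp (-(t ^ 2) / (2 * σ ^ 2))) S volume)
    (hupper : 0 < volume (S ∩ Set.Ioi a)) (hlower : 0 < volume (S ∩ Set.Ioc 0 a)) :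
    StrictMonoOn
      (fun σ =>
        (∫ t in S ∩ Set.Ioi a, t ^ (q - 1) * Real.exp (-(t ^ 2) / (2 * σ ^ 2))) /
          ∫ t in S, t ^ (q - 1) * Real.exp (-(t ^ 2) / (2 * σ ^ 2)))
      (Set.Ioi (0 : ℝ)) := by
  intro σ₁ hσ₁ σ₂ hσ₂ h12
  simp only [Set.mem_Ioi] at hσ₁ hσ₂
  set U : Set ℝ := S ∩ Set.Ioi a with hUdef
  set L : Set ℝ := S ∩ Set.Ioc 0 a with hLdef
  set f₁ : ℝ → ℝ := fun t => t ^ (q - 1) * Real.exp (-(t ^ 2) / (2 * σ₁ ^ 2)) with hf₁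
  set f₂ : ℝ → ℝ := fun t => t ^ (q - 1) * Real.exp (-(t ^ 2) / (2 * σ₂ ^ 2)) with hf₂
  have hU : MeasurableSet U := hS.inter measurableSet_Ioi
  have hL : MeasurableSet L := hS.inter measurableSet_Ioc
  have hU0 : U ⊆ Set.Ioi (0 : ℝ) := fun t ht => hS0 ht.1
  have hL0 : L ⊆ Set.Ioi (0 : ℝ) := fun t ht => hS0 ht.1
  have hi₁ := hint σ₁ hσ₁
  have hi₂ := hint σ₂ hσ₂
  have hiU₁ : IntegrableOn f₁ U := hi₁.mono_set inter_subset_left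
  have hiU₂ : IntegrableOn f₂ U := hi₂.mono_set inter_subset_left
  have hiL₁ : IntegrableOn f₁ L := hi₁.mono_set inter_subset_left
  have hiL₂ : IntegrableOn f₂ L := hi₂.mono_set inter_subset_left
  have posU₁ : 0 < ∫ t in U, f₁ t := chi_setIntegral_pos q σ₁ U hU hU0 hupper hiU₁
  have posU₂ : 0 < ∫ t in U, f₂ t := chi_setIntegral_pos q σ₂ U hU hU0 hupper hiU₂
  have posL₁ : 0 < ∫ t in L, f₁ t := chi_setIntegral_pos q σ₁ L hL hL0 hlower hiL₁
  have posL₂ : 0 < ∫ t in L, f₂ t := chi_setIntegral_pos q σ₂ L hL hL0 hlower hiL₂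
  -- split S into U and L
  have hScover : S = U ∪ L := by
    ext t
    constructor
    · intro ht
      rcases le_or_gt t a with h | h
      · exact Or.inr ⟨ht, hS0 ht, h⟩
      · exact Or.inl ⟨ht, h⟩
    · rintro (ht | ht) <;> exact ht.1
  have hdisj : Disjoint U L := by
    refine Set.disjoint_left.mpr ?_
    rintro t ⟨-, ht⟩ ⟨-, -, ht'⟩
    exact absurd ht' (not_le.mpr ht)
  have hsplit₁ : ∫ t in S, f₁ t = (∫ t in U, f₁ t) + ∫ t in L, f₁ t := by
    rw [hScover]; exact setIntegral_union hdisj hL hiU₁ hiL₁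
  have hsplit₂ : ∫ t in S, f₂ t = (∫ t in U, f₂ t) + ∫ t in L, f₂ t := by
    rw [hScover]; exact setIntegral_union hdisj hL hiU₂ hiL₂
  -- key product inequality via product measure
  have key : (∫ t in U, f₁ t) * (∫ t in L, f₂ t) < (∫ t in U, f₂ t) * (∫ t in L, f₁ t) := by
    set μ : Measure (ℝ × ℝ) := (volume.restrict U).prod (volume.restrict L) with hμ
    have hg : Integrable (fun z : ℝ × ℝ => f₂ z.1 * f₁ z.2) μ :=
      Integrable.mul_prod hiU₂ hiL₁
    have hf : Integrable (fun z : ℝ × ℝ => f₁ z.1 * f₂ z.2) μ :=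
      Integrable.mul_prod hiU₁ hiL₂
    have hpt : ∀ z : ℝ × ℝ, z ∈ U ×ˢ L → f₁ z.1 * f₂ z.2 < f₂ z.1 * f₁ z.2 := by
      rintro ⟨t, s⟩ ⟨htU, hsL⟩
      have ht0 : (0 : ℝ) < t := hU0 htU
      have hs0 : (0 : ℝ) < s := hL0 hsL
      have hts : s < t := lt_of_le_of_lt hsL.2.2 htU.2
      have hpow : (0 : ℝ) < t ^ (q - 1) * s ^ (q - 1) :=
        mul_pos (pow_pos ht0 _) (pow_pos hs0 _)
      have hexp : Real.exp (-(t ^ 2) / (2 * σ₁ ^ 2)) * Real.exp (-(s ^ 2) / (2 * σ₂ ^ 2)) <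
          Real.exp (-(t ^ 2) / (2 * σ₂ ^ 2)) * Real.exp (-(s ^ 2) / (2 * σ₁ ^ 2)) := by
        rw [← Real.exp_add, ← Real.exp_add]
        apply Real.exp_lt_exp.mpr
        have hσ1 : (0 : ℝ) < σ₁ ^ 2 := pow_pos hσ₁ 2
        have hσ2 : (0 : ℝ) < σ₂ ^ 2 := pow_pos hσ₂ 2
        rw [div_add_div _ _ (by positivity : (2 * σ₁ ^ 2 : ℝ) ≠ 0) (by positivity : (2 * σ₂ ^ 2 : ℝ) ≠ 0),
            div_add_div _ _ (by positivity : (2 * σ₂ ^ 2 : ℝ) ≠ 0) (by positivity : (2 * σ₁ ^ 2 : ℝ) ≠ 0)]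
        rw [div_lt_div_iff₀ (by positivity) (by positivity)]
        have h1 : s ^ 2 < t ^ 2 := by nlinarith
        have h2 : σ₁ ^ 2 < σ₂ ^ 2 := by nlinarith
        nlinarith [mul_pos (mul_pos hσ1 hσ2) (mul_pos (sub_pos.mpr h1) (sub_pos.mpr h2))]
      calc f₁ t * f₂ s = t ^ (q - 1) * s ^ (q - 1) *
              (Real.exp (-(t ^ 2) / (2 * σ₁ ^ 2)) * Real.exp (-(s ^ 2) / (2 * σ₂ ^ 2))) := by
            simp only [hf₁, hf₂]; ring
        _ < t ^ (q - 1) * s ^ (q - 1) *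
              (Real.exp (-(t ^ 2) / (2 * σ₂ ^ 2)) * Real.exp (-(s ^ 2) / (2 * σ₁ ^ 2))) :=
            (mul_lt_mul_iff_right₀ hpow).mpr hexp
        _ = f₂ t * f₁ s := by simp only [hf₁, hf₂]; ring
    have hsub : Integrable (fun z : ℝ × ℝ => f₂ z.1 * f₁ z.2 - f₁ z.1 * f₂ z.2) μ := hg.sub hf
    have hdiff : 0 < ∫ z : ℝ × ℝ, (f₂ z.1 * f₁ z.2 - f₁ z.1 * f₂ z.2) ∂μ := by
      rw [integral_pos_iff_support_of_nonneg_ae ?_ hsub]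
      · refine lt_of_lt_of_le ?_ (measure_mono (?_ : U ×ˢ L ⊆ _))
        · rw [hμ, Measure.prod_prod, Measure.restrict_apply_self, Measure.restrict_apply_self]
          exact ENNReal.mul_pos (ne_of_gt hupper) (ne_of_gt hlower)
        · intro z hz
          exact Function.mem_support.mpr (ne_of_gt (sub_pos.mpr (hpt z hz)))
      · have : μ = (volume.prod volume).restrict (U ×ˢ L) := Measure.prod_restrict U L
        rw [this]
        filter_upwards [ae_restrict_mem (hU.prod hL)] with z hz
        exact le_of_lt (sub_pos.mpr (hpt z hz))
    rw [integral_sub hg hf, integral_prod_mul f₂ f₁, integral_prod_mul f₁ f₂] at hdiff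
    linarith
  -- conclude
  show (∫ t in U, f₁ t) / (∫ t in S, f₁ t) < (∫ t in U, f₂ t) / (∫ t in S, f₂ t)
  rw [hsplit₁, hsplit₂, div_lt_div_iff₀ (by linarith) (by linarith)]
  nlinarith
end

section
/- Let f, g : (0,∞) → (0,∞) be integrable on a measurable set S ⊆ (0,∞) with the ratio g(t)/f(t) nondecreasing in t, and let a > 0 with both S ∩ (a,∞) and S ∩ (0,a] of positive measure. Then (∫_{S∩(a,∞)} g)/(∫_S g) ≥ (∫_{S∩(a,∞)} f)/(∫_S f). -/
open MeasureTheory Set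

/-- Monotone likelihood ratio inequality: densities with nondecreasing likelihood ratio
have ordered truncated survival probabilities. -/
theorem mlr_survival_inequality (S : Set ℝ) (hS : MeasurableSet S) (hS0 : S ⊆ Set.Ioi (0 : ℝ))
    (f g : ℝ → ℝ) (hf : ∀ t ∈ S, 0 < f t) (hg : ∀ t ∈ S, 0 < g t)
    (hfint : IntegrableOn f S volume) (hgint : IntegrableOn g S volume)
    (hratio : ∀ s ∈ S, ∀ t ∈ S, s ≤ t → g s / f s ≤ g t / f t)
    (a : ℝ) (ha : 0 < a)
    (hupper : 0 < volume (S ∩ Set.Ioi a)) (hlower : 0 < volume (S ∩ Set.Ioc 0 a))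
    (hfpos : 0 < ∫ t in S, f t) (hgpos : 0 < ∫ t in S, g t) :
    (∫ t in S ∩ Set.Ioi a, f t) / (∫ t in S, f t)
      ≤ (∫ t in S ∩ Set.Ioi a, g t) / (∫ t in S, g t) := by
  set A : Set ℝ := S ∩ Set.Ioi a with hA
  set B : Set ℝ := S ∩ Set.Ioc 0 a with hB
  have hAm : MeasurableSet A := hS.inter measurableSet_Ioi
  have hBm : MeasurableSet B := hS.inter measurableSet_Ioc
  have hAS : A ⊆ S := inter_subset_left
  have hBS : B ⊆ S := inter_subset_left
  have hfA : IntegrableOn f A volume := hfint.mono_set hAS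
  have hfB : IntegrableOn f B volume := hfint.mono_set hBS
  have hgA : IntegrableOn g A volume := hgint.mono_set hAS
  have hgB : IntegrableOn g B volume := hgint.mono_set hBS
  have hdisj : Disjoint A B := by
    apply Set.disjoint_left.mpr
    rintro x ⟨-, hx1⟩ ⟨-, hx2⟩
    exact absurd hx2.2 (not_le.mpr hx1)
  have hunion : A ∪ B = S := by
    ext x
    constructor
    · rintro (h | h) <;> exact h.1
    · intro hx
      rcases le_or_gt x a with h | h
      · exact Or.inr ⟨hx, hS0 hx, h⟩
      · exact Or.inl ⟨hx, h⟩
  have hsplitf : (∫ t in S, f t) = (∫ t in A, f t) + (∫ t in B, f t) := by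
    rw [← hunion]; exact setIntegral_union hdisj hBm hfA hfB
  have hsplitg : (∫ t in S, g t) = (∫ t in A, g t) + (∫ t in B, g t) := by
    rw [← hunion]; exact setIntegral_union hdisj hBm hgA hgB
  -- key inequality: ∫_A f * ∫_B g ≤ ∫_A g * ∫_B f
  have key : (∫ t in A, f t) * (∫ s in B, g s) ≤ (∫ t in A, g t) * (∫ s in B, f s) := by
    have step1 : ∀ t ∈ A, f t * (∫ s in B, g s) ≤ g t * (∫ s in B, f s) := by
      intro t htA
      rw [← integral_const_mul, ← integral_const_mul]
      apply setIntegral_mono_on (hgB.const_mul _) (hfB.const_mul _) hBm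
      intro s hsB
      have hst : s ≤ t := le_trans hsB.2.2 (le_of_lt htA.2)
      have hr := hratio s (hBS hsB) t (hAS htA) hst
      have hfs := hf s (hBS hsB)
      have hft := hf t (hAS htA)
      rw [div_le_div_iff₀ hfs hft] at hr
      nlinarith
    calc (∫ t in A, f t) * (∫ s in B, g s)
        = ∫ t in A, f t * (∫ s in B, g s) := (integral_mul_const _ _).symm
      _ ≤ ∫ t in A, g t * (∫ s in B, f s) :=
          setIntegral_mono_on (hfA.mul_const _) (hgA.mul_const _) hAm step1
      _ = (∫ t in A, g t) * (∫ s in B, f s) := integral_mul_const _ _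
  rw [div_le_div_iff₀ hfpos hgpos, hsplitf, hsplitg]
  nlinarith
end

section
/- Under the model X_{ij} = μ_{ij} + σ ξ_{ij} with ξ_{ij} i.i.d. N(0,1), for any integers s, q with ns ≤ q and n ≥ 2, sup over σ > 0 and over μ with max_i ‖μ_i‖_0 ≤ s of (1/σ²) E|σ̂²_Sample(X) − σ²| is at least c̃_0 · s/q, where c̃_0 > 0 is a constant (one may take c̃_0 = 1/2 by choosing nonzero entries with squares at least σ²). -/
/-!
For noise that is centred, of unit variance and pairwise independent within each column,
`E ∑ᵢ (Xᵢⱼ - X̄ⱼ)² = (n - 1) σ² + ∑ᵢ (μᵢⱼ - μ̄ⱼ)²`, so the pooled sample variance is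
biased upwards by exactly `σ̂²_Sample(μ)`, and `E |Y| ≥ E Y` bounds the risk below by this bias.
With `σ = 1` and the staircase mean whose row `i` is the indicator of the columns
`[i s, (i + 1) s)`, each of the first `n s` columns contributes `1 - 1/n`, so the bias is
`n s (1 - 1/n) / ((n - 1) q) = s / q`.
-/

open MeasureTheory ProbabilityTheory Finset

section SumSqSubMean

variable {ι : Type*} [Fintype ι]

lemma sum_sq_sub_mean (x : ι → ℝ) :
    ∑ i, (x i - (∑ k, x k) / Fintype.card ι) ^ 2
      = ∑ i, x i ^ 2 - (∑ i, x i) ^ 2 / Fintype.card ι := by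
  rcases isEmpty_or_nonempty ι with hι | hι
  · simp
  have hN : (Fintype.card ι : ℝ) ≠ 0 := by positivity
  simp_rw [sub_sq, sum_add_distrib, sum_sub_distrib, ← sum_mul, ← mul_sum, sum_const, card_univ,
    nsmul_eq_mul]
  field_simp
  ring

variable {Ω : Type*} [MeasurableSpace Ω] {P : Measure Ω} {X : ι → Ω → ℝ}

lemma integral_sq_eq_variance_add_sq [IsProbabilityMeasure P] {Y : Ω → ℝ} (hY : MemLp Y 2 P) :
    ∫ ω, Y ω ^ 2 ∂P = Var[Y; P] + P[Y] ^ 2 := by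
  rw [variance_eq_sub hY]
  simp [Pi.pow_apply]

lemma integrable_sum_sq_sub_mean (hX : ∀ i, MemLp (X i) 2 P) :
    Integrable (fun ω ↦ ∑ i, (X i ω - (∑ k, X k ω) / Fintype.card ι) ^ 2) P := by
  simp_rw [sum_sq_sub_mean]
  exact (integrable_finsetSum _ fun i _ ↦ (hX i).integrable_sq).sub
    ((memLp_finsetSum _ fun i _ ↦ hX i).integrable_sq.div_const _)

lemma integral_sum_sq_sub_mean [IsProbabilityMeasure P] (hX : ∀ i, MemLp (X i) 2 P)
    (hindep : Pairwise fun i k ↦ X i ⟂ᵢ[P] X k) :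
    ∫ ω, ∑ i, (X i ω - (∑ k, X k ω) / Fintype.card ι) ^ 2 ∂P
      = (1 - 1 / (Fintype.card ι : ℝ)) * ∑ i, Var[X i; P]
        + ∑ i, (P[X i] - (∑ k, P[X k]) / (Fintype.card ι : ℝ)) ^ 2 := by
  have hsum_eq : (fun ω ↦ ∑ k, X k ω) = ∑ k, X k := by ext; simp
  have hsum : MemLp (fun ω ↦ ∑ k, X k ω) 2 P := memLp_finsetSum _ fun i _ ↦ hX i
  have hvar_sum : Var[fun ω ↦ ∑ k, X k ω; P] = ∑ i, Var[X i; P] := by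
    rw [hsum_eq]
    exact IndepFun.variance_sum (fun i _ ↦ hX i) fun i _ k _ hik ↦ hindep hik
  have hmean_sum : P[fun ω ↦ ∑ k, X k ω] = ∑ i, P[X i] :=
    integral_finsetSum _ fun i _ ↦ (hX i).integrable one_le_two
  simp_rw [sum_sq_sub_mean]
  rw [integral_sub (integrable_finsetSum _ fun i _ ↦ (hX i).integrable_sq)
      (hsum.integrable_sq.div_const _), integral_div, integral_finsetSum _
      fun i _ ↦ (hX i).integrable_sq, integral_sq_eq_variance_add_sq hsum, hvar_sum, hmean_sum]
  simp_rw [integral_sq_eq_variance_add_sq (hX _), sum_add_distrib]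
  ring

end SumSqSubMean

section AdditiveNoise

variable {Ω : Type*} [MeasurableSpace Ω] {P : Measure Ω} [IsProbabilityMeasure P]

lemma integral_sum_sq_sub_mean_const_add_mul {ι : Type*} [Fintype ι] [Nonempty ι]
    {ξ : ι → Ω → ℝ} (hξ : ∀ i, MemLp (ξ i) 2 P) (hmean : ∀ i, P[ξ i] = 0)
    (hvar : ∀ i, Var[ξ i; P] = 1) (hindep : Pairwise fun i k ↦ ξ i ⟂ᵢ[P] ξ k)
    (m : ι → ℝ) (σ : ℝ) :
    ∫ ω, ∑ i, (m i + σ * ξ i ω - (∑ k, (m k + σ * ξ k ω)) / Fintype.card ι) ^ 2 ∂P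
      = ((Fintype.card ι : ℝ) - 1) * σ ^ 2
        + ∑ i, (m i - (∑ k, m k) / Fintype.card ι) ^ 2 := by
  set X : ι → Ω → ℝ := fun i ω ↦ m i + σ * ξ i ω
  have hX : ∀ i, MemLp (X i) 2 P := fun i ↦ (memLp_const (m i)).add ((hξ i).const_mul σ)
  have hXmean : ∀ i, P[X i] = m i := fun i ↦ by
    rw [integral_add (integrable_const _) (((hξ i).integrable one_le_two).const_mul σ),
      integral_const_mul, hmean, integral_const]
    simp
  have hXvar : ∀ i, Var[X i; P] = σ ^ 2 := fun i ↦ by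
    rw [variance_const_add ((hξ i).aestronglyMeasurable.const_mul σ), variance_const_mul,
      hvar, mul_one]
  have hXindep : Pairwise fun i k ↦ X i ⟂ᵢ[P] X k := fun i k hik ↦
    (hindep hik).comp (φ := fun x ↦ m i + σ * x) (ψ := fun x ↦ m k + σ * x)
      (by fun_prop) (by fun_prop)
  have hN : (Fintype.card ι : ℝ) ≠ 0 := by positivity
  rw [integral_sum_sq_sub_mean hX hXindep]
  simp only [hXmean, hXvar, sum_const, card_univ, nsmul_eq_mul]
  field_simp

end AdditiveNoise

section PooledSampleVariance

variable {n q : ℕ}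

/-- `σ̂²_Sample`: the `n` rows are the samples and `X̄_j` is the mean of column `j`. -/
noncomputable def pooledSampleVariance (X : Fin n → Fin q → ℝ) : ℝ :=
  (∑ i, ∑ j, (X i j - (∑ i', X i' j) / n) ^ 2) / ((n : ℝ) * q - q)

lemma pooledSampleVariance_eq_sum_columns (X : Fin n → Fin q → ℝ) :
    pooledSampleVariance X
      = (∑ j, ∑ i, (X i j - (∑ i', X i' j) / n) ^ 2) / ((n - 1 : ℝ) * q) := by
  rw [pooledSampleVariance, sum_comm, sub_one_mul]

variable {Ω : Type*} [MeasurableSpace Ω] {P : Measure Ω} [IsProbabilityMeasure P]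
  {ξ : Fin n × Fin q → Ω → ℝ}

lemma integrable_sum_sq_sub_column_mean (hξ : ∀ p, MemLp (ξ p) 2 P)
    (μ : Fin n → Fin q → ℝ) (σ : ℝ) (j : Fin q) :
    Integrable (fun ω ↦ ∑ i, (μ i j + σ * ξ (i, j) ω
      - (∑ i', (μ i' j + σ * ξ (i', j) ω)) / n) ^ 2) P := by
  have h := integrable_sum_sq_sub_mean (X := fun i ω ↦ μ i j + σ * ξ (i, j) ω)
    fun i ↦ (memLp_const (μ i j)).add ((hξ (i, j)).const_mul σ)
  rwa [Fintype.card_fin] at h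

lemma integrable_pooledSampleVariance (hξ : ∀ p, MemLp (ξ p) 2 P) (μ : Fin n → Fin q → ℝ)
    (σ : ℝ) :
    Integrable (fun ω ↦ pooledSampleVariance fun i j ↦ μ i j + σ * ξ (i, j) ω) P := by
  simp_rw [pooledSampleVariance_eq_sum_columns]
  exact (integrable_finsetSum _ fun j _ ↦
    integrable_sum_sq_sub_column_mean hξ μ σ j).div_const _

theorem integral_pooledSampleVariance (hn : 2 ≤ n) (hq : 0 < q) (hξ : ∀ p, MemLp (ξ p) 2 P)
    (hmean : ∀ p, P[ξ p] = 0) (hvar : ∀ p, Var[ξ p; P] = 1) (hindep : iIndepFun ξ P)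
    (μ : Fin n → Fin q → ℝ) (σ : ℝ) :
    ∫ ω, pooledSampleVariance (fun i j ↦ μ i j + σ * ξ (i, j) ω) ∂P
      = σ ^ 2 + pooledSampleVariance μ := by
  have : NeZero n := ⟨by omega⟩
  have hcol (j : Fin q) := integral_sum_sq_sub_mean_const_add_mul (fun i ↦ hξ (i, j))
    (fun i ↦ hmean (i, j)) (fun i ↦ hvar (i, j))
    (fun i k hik ↦ hindep.indepFun (by simpa using hik)) (fun i ↦ μ i j) σ
  simp only [Fintype.card_fin] at hcol
  have hn1 : (n - 1 : ℝ) ≠ 0 := by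
    have : (2 : ℝ) ≤ n := by exact_mod_cast hn
    linarith
  have hq0 : (q : ℝ) ≠ 0 := by positivity
  simp_rw [pooledSampleVariance_eq_sum_columns]
  rw [integral_div, integral_finsetSum _ fun j _ ↦ integrable_sum_sq_sub_column_mean hξ μ σ j]
  simp_rw [hcol, sum_add_distrib, sum_const, card_univ, Fintype.card_fin, nsmul_eq_mul]
  field_simp

end PooledSampleVariance

section Staircase

variable {n q s : ℕ}

def staircase (s : ℕ) (i : Fin n) (j : Fin q) : ℝ := if (j : ℕ) / s = i then 1 else 0

lemma card_staircase_ne_zero_le (hs : 0 < s) (i : Fin n) :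
    (Finset.univ.filter fun j : Fin q ↦ staircase s i j ≠ 0).card ≤ s := by
  have hsupp : ∀ j : Fin q, staircase s i j ≠ 0 → (j : ℕ) / s = i := by
    intro j hj
    by_contra h
    simp [staircase, h] at hj
  calc (Finset.univ.filter fun j : Fin q ↦ staircase s i j ≠ 0).card
      ≤ (range s).card := by
        refine card_le_card_of_injOn (fun j ↦ (j : ℕ) % s)
          (fun j _ ↦ mem_range.2 (Nat.mod_lt _ hs)) fun j hj k hk hjk ↦ Fin.ext ?_
        simp only [coe_filter, Set.mem_ofPred_eq, mem_univ, true_and] at hj hk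
        rw [← Nat.div_add_mod j s, ← Nat.div_add_mod k s, hsupp j hj, hsupp k hk]
        exact congrArg _ hjk
    _ = s := card_range s

lemma sum_staircase_column (j : Fin q) :
    ∑ i : Fin n, staircase s i j = if (j : ℕ) / s < n then 1 else 0 := by
  simp [staircase, Fin.sum_univ_eq_sum_range (fun i ↦ if (j : ℕ) / s = i then (1 : ℝ) else 0)]

lemma sum_sq_sub_mean_staircase_column [NeZero n] (j : Fin q) :
    ∑ i : Fin n, (staircase s i j - (∑ i' : Fin n, staircase s i' j) / n) ^ 2
      = if (j : ℕ) / s < n then 1 - 1 / (n : ℝ) else 0 := by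
  have h := sum_sq_sub_mean fun i : Fin n ↦ staircase s i j
  simp only [Fintype.card_fin] at h
  have hsq : ∀ i : Fin n, staircase s i j ^ 2 = staircase s i j := fun i ↦ by
    unfold staircase; split_ifs <;> norm_num
  rw [h, sum_congr rfl fun i _ ↦ hsq i, sum_staircase_column]
  split_ifs <;> ring

lemma pooledSampleVariance_staircase (hn : 2 ≤ n) (hs : 0 < s) (hns : n * s ≤ q) :
    pooledSampleVariance (staircase s : Fin n → Fin q → ℝ) = s / q := by
  have : NeZero n := ⟨by omega⟩
  have hcard : (Finset.univ.filter fun j : Fin q ↦ (j : ℕ) / s < n).card = n * s := by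
    simp_rw [Nat.div_lt_iff_lt_mul hs, Fin.card_filter_val_lt]
    omega
  have hn1 : (n - 1 : ℝ) ≠ 0 := by
    have : (2 : ℝ) ≤ n := by exact_mod_cast hn
    linarith
  have hq0 : (q : ℝ) ≠ 0 := by
    have : 0 < q := lt_of_lt_of_le (Nat.mul_pos (by omega) hs) hns
    positivity
  rw [pooledSampleVariance_eq_sum_columns]
  simp_rw [sum_sq_sub_mean_staircase_column]
  rw [sum_ite, sum_const, sum_const_zero, hcard, nsmul_eq_mul]
  push_cast
  field_simp
  ring

end Staircase

lemma ProbabilityTheory.HasLaw.memLp_of_gaussianReal {Ω : Type*} [MeasurableSpace Ω]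
    {P : Measure Ω} {X : Ω → ℝ} {m : ℝ} {v : NNReal} (hX : HasLaw X (gaussianReal m v) P)
    {p : ENNReal} (hp : p ≠ ⊤) : MemLp X p P := by
  have h := memLp_id_gaussianReal' (μ := m) (v := v) p hp
  rw [← hX.map_eq] at h
  exact (memLp_map_measure_iff aestronglyMeasurable_id hX.aemeasurable).1 h

/-- Lower bound on the worst-case relative risk of the pooled sample variance estimator
over `s`-row-sparse means: there is a witness `σ > 0` and sparse `μ` achieving
relative error at least `(1/2) · s/q`. -/
theorem sample_variance_risk_lower_bound {Ω : Type*} [MeasurableSpace Ω] (P : Measure Ω)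
    [IsProbabilityMeasure P] (n q s : ℕ) (hn : 2 ≤ n) (hq : 1 ≤ q) (hs : 1 ≤ s)
    (hns : n * s ≤ q)
    (ξ : Fin n × Fin q → Ω → ℝ) (hmeas : ∀ p, Measurable (ξ p))
    (hindep : iIndepFun ξ P)
    (hgauss : ∀ p, Measure.map (ξ p) P = gaussianReal 0 1) :
    ∃ σ : ℝ, 0 < σ ∧ ∃ μ : Fin n → Fin q → ℝ,
      (∀ i, (Finset.univ.filter fun j => μ i j ≠ 0).card ≤ s) ∧
      (1 / 2 : ℝ) * (s / q) ≤
        (1 / σ ^ 2) *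
          ∫ ω,
            |(∑ i, ∑ j,
                ((μ i j + σ * ξ (i, j) ω) -
                    (∑ i', (μ i' j + σ * ξ (i', j) ω)) / n) ^ 2) /
                ((n : ℝ) * q - q) - σ ^ 2| ∂P := by
  have hlaw (p : Fin n × Fin q) : HasLaw (ξ p) (gaussianReal 0 1) P :=
    ⟨(hmeas p).aemeasurable, hgauss p⟩
  have hξ (p : Fin n × Fin q) : MemLp (ξ p) 2 P := (hlaw p).memLp_of_gaussianReal (by simp)
  have hmean (p : Fin n × Fin q) : P[ξ p] = 0 :=
    (hlaw p).integral_eq.trans integral_id_gaussianReal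
  have hvar (p : Fin n × Fin q) : Var[ξ p; P] = 1 := by
    simp [(hlaw p).variance_eq, variance_id_gaussianReal]
  refine ⟨1, one_pos, staircase s, card_staircase_ne_zero_le hs, ?_⟩
  set Y : Ω → ℝ := fun ω ↦ pooledSampleVariance fun i j ↦ staircase s i j + 1 * ξ (i, j) ω
  change _ ≤ _ * ∫ ω, |Y ω - _| ∂P
  have hbias : ∫ ω, (Y ω - 1 ^ 2) ∂P = (s / q : ℝ) := by
    rw [integral_sub (integrable_pooledSampleVariance hξ (staircase s) 1) (integrable_const _),
      integral_pooledSampleVariance hn hq hξ hmean hvar hindep,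
      pooledSampleVariance_staircase hn hs hns]
    simp
  calc (1 / 2 : ℝ) * (s / q) ≤ s / q := by
        have : (0 : ℝ) ≤ s / q := by positivity
        linarith
    _ = ∫ ω, (Y ω - 1 ^ 2) ∂P := hbias.symm
    _ ≤ ∫ ω, |Y ω - 1 ^ 2| ∂P := (le_abs_self _).trans abs_integral_le_integral_abs
    _ = _ := by rw [one_pow, div_one, one_mul]
end
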